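/- With P idempotent linear filtration-preserving on a complete filtered associative algebra A, every η ∈ 1 + A_1 admits a unique factorization η = η_− · η_+ with η_− ∈ exp(P(A_1)) and η_+ ∈ exp((id−P)(A_1)). -/

import Mathlib

open scoped BigOperators

noncomputable def expS (K : Type*) {A : Type*} [Field K] [CharZero K] [Ring A] [Algebra K A]
    [UniformSpace A] (a : A) : A :=
  ∑' n : ℕ, ((n.factorial : K)⁻¹) • a ^ n

noncomputable def logS (K : Type*) {A : Type*} [Field K] [CharZero K] [Ring A] [Algebra K A]
    [UniformSpace A] (a : A) : A :=
  ∑' n : ℕ, (((-1 : K) ^ n) * ((n : K) + 1)⁻¹) • (a - 1) ^ (n + 1)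

noncomputable def BCHs (K : Type*) {A : Type*} [Field K] [CharZero K] [Ring A] [Algebra K A]
    [UniformSpace A] (x y : A) : A :=
  logS K (expS K x * expS K y) - x - y

/-- A complete decreasing multiplicative filtration defining the topology of `A`. -/
def IsCompleteFiltration (K : Type*) {A : Type*} [Field K] [CharZero K] [Ring A] [Algebra K A]
    [UniformSpace A] (F : ℕ → Submodule K A) : Prop :=
  F 0 = ⊤ ∧ (∀ n, F (n + 1) ≤ F n) ∧
    (∀ m n : ℕ, ∀ x ∈ F m, ∀ y ∈ F n, x * y ∈ F (m + n)) ∧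
    (∀ n, IsOpen ((F n : Set A))) ∧
    (∀ U ∈ nhds (0 : A), ∃ n, ((F n : Set A)) ⊆ U)

variable {K : Type*} [Field K] [CharZero K] {A : Type*} [Ring A] [Algebra K A]
  [UniformSpace A] [CompleteSpace A] [T2Space A] [IsTopologicalRing A]
  [IsUniformAddGroup A]

/-! Put `Φ x = expS K (P x) * expS K (x - P x)`. Since `expS K (u + d) ≡ expS K u * (1 + d)`
modulo `F (n + 1)` whenever `d ∈ F n`, the map `Φ` is the identity to first order:
`Φ (x + d) ≡ Φ x + d`. Hence the successive approximations `x ↦ x + (η - Φ x)` gain one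
filtration degree per step and converge to a solution of `Φ x = η` in `F 1`, and the same estimate
makes `Φ` injective on `F 1`. As `P` is idempotent, `(a, b) ↦ a + b` is inverted by
`x ↦ (P x, x - P x)` on `P (F 1) × (id - P) (F 1)`, so factorizations of `η` correspond to
solutions of `Φ x = η`. -/

namespace IsCompleteFiltration

variable {K A : Type*} [Field K] [CharZero K] [Ring A] [Algebra K A] [UniformSpace A]
  {F : ℕ → Submodule K A}

lemma mem_zero (hF : IsCompleteFiltration K F) (x : A) : x ∈ F 0 := by
  rw [hF.1]
  exact Submodule.mem_top

lemma antitone (hF : IsCompleteFiltration K F) : Antitone F :=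
  antitone_nat_of_succ_le hF.2.1

lemma mul_mem (hF : IsCompleteFiltration K F) {m n p : ℕ} (h : p ≤ m + n) {x y : A}
    (hx : x ∈ F m) (hy : y ∈ F n) : x * y ∈ F p :=
  hF.antitone h (hF.2.2.1 m n x hx y hy)

lemma mul_mem_left (hF : IsCompleteFiltration K F) {n : ℕ} (x : A) {y : A} (hy : y ∈ F n) :
    x * y ∈ F n :=
  hF.mul_mem (by omega) (hF.mem_zero x) hy

lemma mul_mem_right (hF : IsCompleteFiltration K F) {n : ℕ} {x : A} (hx : x ∈ F n) (y : A) :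
    x * y ∈ F n :=
  hF.mul_mem (by omega) hx (hF.mem_zero y)

lemma pow_mem (hF : IsCompleteFiltration K F) {x : A} (hx : x ∈ F 1) (k : ℕ) :
    x ^ k ∈ F k := by
  induction k with
  | zero => simpa using hF.mem_zero 1
  | succ k ih => rw [pow_succ]; exact hF.mul_mem le_rfl ih hx

lemma isClosed [IsTopologicalAddGroup A] (hF : IsCompleteFiltration K F) (n : ℕ) :
    IsClosed (F n : Set A) :=
  AddSubgroup.isClosed_of_isOpen (F n).toAddSubgroup (hF.2.2.2.1 n)

lemma tsum_mem [IsTopologicalAddGroup A] (hF : IsCompleteFiltration K F) {f : ℕ → A} {n : ℕ}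
    (hf : ∀ k, f k ∈ F n) : ∑' k, f k ∈ F n := by
  by_cases hs : Summable f
  · exact (hF.isClosed n).mem_of_tendsto hs.hasSum
      (Filter.Eventually.of_forall fun s => Submodule.sum_mem _ fun k _ => hf k)
  · rw [tsum_eq_zero_of_not_summable hs]
    exact zero_mem _

lemma eq_of_forall_sub_mem [T1Space A] (hF : IsCompleteFiltration K F) {x y : A}
    (h : ∀ n, x - y ∈ F (n + 1)) : x = y := by
  have : (x - y) ⤳ 0 := specializes_iff_pure.2 fun U hU => by
    obtain ⟨n, hn⟩ := hF.2.2.2.2 U hU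
    exact hn (hF.antitone n.le_succ (h n))
  exact sub_eq_zero.1 this.eq

lemma summable_of_mem [IsUniformAddGroup A] [CompleteSpace A] (hF : IsCompleteFiltration K F)
    {f : ℕ → A} (hf : ∀ k, f k ∈ F k) : Summable f := by
  refine summable_iff_vanishing.2 fun U hU => ?_
  obtain ⟨n, hn⟩ := hF.2.2.2.2 U hU
  refine ⟨Finset.range n, fun t ht => hn (Submodule.sum_mem _ fun k hk => ?_)⟩
  have hnk : n ≤ k := not_lt.1 fun hlt => Finset.disjoint_left.1 ht hk (Finset.mem_range.2 hlt)
  exact hF.antitone hnk (hf k)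

lemma exists_forall_sub_mem [IsUniformAddGroup A] [CompleteSpace A] [T2Space A]
    (hF : IsCompleteFiltration K F) {w : ℕ → A} (hw : ∀ m, w (m + 1) - w m ∈ F (m + 1)) :
    ∃ z, ∀ m, z - w m ∈ F (m + 1) := by
  have hs : Summable fun m => w (m + 1) - w m :=
    hF.summable_of_mem fun m => hF.antitone m.le_succ (hw m)
  refine ⟨w 0 + ∑' m, (w (m + 1) - w m), fun M => ?_⟩
  have htail : w 0 + ∑' m, (w (m + 1) - w m) - w M = ∑' i, (w (i + M + 1) - w (i + M)) := by
    rw [← hs.sum_add_tsum_nat_add M, Finset.sum_range_sub (fun i => w i)]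
    abel
  rw [htail]
  exact hF.tsum_mem fun i => hF.antitone (by omega) (hw (i + M))

lemma add_pow_sub_pow_sub_nsmul_mem (hF : IsCompleteFiltration K F) {x y : A} {n : ℕ}
    (hx : x ∈ F 1) (hn : 1 ≤ n) (hy : y ∈ F n) (k : ℕ) :
    (x + y) ^ (k + 1) - x ^ (k + 1) - (k + 1) • (x ^ k * y) ∈ F (n + 1) := by
  induction k with
  | zero => simp
  | succ k ih =>
    have hcomm : y * x - x * y ∈ F (n + 1) :=
      sub_mem (hF.mul_mem le_rfl hy hx) (hF.mul_mem (by omega) hx hy)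
    have hsq : y * y ∈ F (n + 1) := hF.mul_mem (by omega) hy hy
    have hid : (x + y) ^ (k + 1 + 1) - x ^ (k + 1 + 1) - (k + 1 + 1) • (x ^ (k + 1) * y)
        = ((x + y) ^ (k + 1) - x ^ (k + 1) - (k + 1) • (x ^ k * y)) * (x + y)
          + (k + 1) • (x ^ k * (y * x - x * y)) + (k + 1) • (x ^ k * (y * y)) := by
      simp only [pow_succ, smul_sub, sub_mul, add_mul, mul_add, mul_sub, smul_mul_assoc,
        mul_assoc, succ_nsmul]
      abel
    rw [hid]
    exact add_mem (add_mem (hF.mul_mem_right ih _) (nsmul_mem (hF.mul_mem_left _ hcomm) _))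
      (nsmul_mem (hF.mul_mem_left _ hsq) _)

lemma summable_expS [IsUniformAddGroup A] [CompleteSpace A]
    (hF : IsCompleteFiltration K F) {x : A} (hx : x ∈ F 1) :
    Summable fun k : ℕ => ((k.factorial : K)⁻¹) • x ^ k :=
  hF.summable_of_mem fun k => Submodule.smul_mem _ _ (hF.pow_mem hx k)

end IsCompleteFiltration

lemma inv_factorial_succ_smul_nsmul {K M : Type*} [Field K] [CharZero K] [AddCommGroup M]
    [Module K M] (k : ℕ) (z : M) :
    (((k + 1).factorial : K)⁻¹) • ((k + 1) • z) = ((k.factorial : K)⁻¹) • z := by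
  rw [← Nat.cast_smul_eq_nsmul K, smul_smul, Nat.factorial_succ]
  congr 1
  push_cast
  field_simp

lemma expS_zero {K A : Type*} [Field K] [CharZero K] [Ring A] [Algebra K A] [UniformSpace A] :
    expS K (0 : A) = 1 := by
  rw [expS, tsum_eq_single 0 fun k hk => by simp [zero_pow hk]]
  simp

namespace IsCompleteFiltration

variable {K A : Type*} [Field K] [CharZero K] [Ring A] [Algebra K A] [UniformSpace A]
  [IsTopologicalRing A] [IsUniformAddGroup A] [CompleteSpace A] [T2Space A]
  {F : ℕ → Submodule K A}

lemma expS_add_sub_mul_mem (hF : IsCompleteFiltration K F) {x y : A} {n : ℕ}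
    (hx : x ∈ F 1) (hn : 1 ≤ n) (hy : y ∈ F n) :
    expS K (x + y) - expS K x * (1 + y) ∈ F (n + 1) := by
  have hsx := hF.summable_expS hx
  have hsxy := hF.summable_expS (add_mem hx (hF.antitone hn hy))
  have hdiff : expS K (x + y) - expS K x =
      ∑' k : ℕ, (((k + 1).factorial : K)⁻¹) • ((x + y) ^ (k + 1) - x ^ (k + 1)) := by
    rw [expS, expS, ← hsxy.tsum_sub hsx, (hsxy.sub hsx).tsum_eq_zero_add]
    simp [smul_sub]
  have hterm : (fun k : ℕ => (((k + 1).factorial : K)⁻¹) • ((k + 1) • (x ^ k * y)))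
      = fun k : ℕ => ((k.factorial : K)⁻¹) • x ^ k * y := by
    simp_rw [inv_factorial_succ_smul_nsmul, smul_mul_assoc]
  have hmul : expS K x * y =
      ∑' k : ℕ, (((k + 1).factorial : K)⁻¹) • ((k + 1) • (x ^ k * y)) := by
    rw [hterm, hsx.tsum_mul_right, expS]
  have hsum : expS K (x + y) - expS K x * (1 + y) = ∑' k : ℕ, (((k + 1).factorial : K)⁻¹) •
      ((x + y) ^ (k + 1) - x ^ (k + 1) - (k + 1) • (x ^ k * y)) := by
    rw [mul_one_add, ← sub_sub, hdiff, hmul,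
      ← Summable.tsum_sub _ (hterm ▸ hsx.mul_right y)]
    · simp only [smul_sub]
    · exact (summable_nat_add_iff 1).2 (hsxy.sub hsx) |>.congr fun k => by simp [smul_sub]
  rw [hsum]
  exact hF.tsum_mem fun k => Submodule.smul_mem _ _ (hF.add_pow_sub_pow_sub_nsmul_mem hx hn hy k)

lemma expS_sub_one_mem (hF : IsCompleteFiltration K F) {x : A} (hx : x ∈ F 1) :
    expS K x - 1 ∈ F 1 := by
  have h := hF.expS_add_sub_mul_mem (zero_mem _) le_rfl hx
  rw [zero_add, expS_zero, one_mul] at h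
  rw [show expS K x - 1 = expS K x - (1 + x) + x by abel]
  exact add_mem (hF.antitone (by omega) h) hx

lemma expS_add_mul_expS_add_sub_mem (hF : IsCompleteFiltration K F) {u v d e : A} {n : ℕ}
    (hu : u ∈ F 1) (hv : v ∈ F 1) (hn : 1 ≤ n) (hd : d ∈ F n) (he : e ∈ F n) :
    expS K (u + d) * expS K (v + e) - expS K u * expS K v - (d + e) ∈ F (n + 1) := by
  have hud := hF.expS_add_sub_mul_mem hu hn hd
  have hve := hF.expS_add_sub_mul_mem hv hn he
  have hu1 := hF.expS_sub_one_mem hu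
  have hv1 := hF.expS_sub_one_mem hv
  have hid : expS K (u + d) * expS K (v + e) - expS K u * expS K v - (d + e)
      = (expS K (u + d) - expS K u * (1 + d)) * expS K (v + e)
        + (expS K u * (1 + d)) * (expS K (v + e) - expS K v * (1 + e))
        + ((expS K u - 1) * d) * expS K v + d * (expS K v - 1)
        + ((expS K u - 1) * expS K v + (expS K v - 1)) * e
        + (expS K u * d) * (expS K v * e) := by
    noncomm_ring
  rw [hid]
  refine add_mem (add_mem (add_mem (add_mem (add_mem ?_ ?_) ?_) ?_) ?_) ?_
  · exact hF.mul_mem_right hud _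
  · exact hF.mul_mem_left _ hve
  · exact hF.mul_mem_right (hF.mul_mem (by omega) hu1 hd) _
  · exact hF.mul_mem (by omega) hd hv1
  · exact hF.mul_mem (by omega) (add_mem (hF.mul_mem_right hu1 _) hv1) he
  · exact hF.mul_mem (by omega) (hF.mul_mem_left _ hd) (hF.mul_mem_left _ he)

end IsCompleteFiltration

def IsTangentToId {R M : Type*} [Ring R] [AddCommGroup M] [Module R M]
    (F : ℕ → Submodule R M) (Φ : M → M) : Prop :=
  ∀ x ∈ F 1, ∀ n, 1 ≤ n → ∀ d ∈ F n, Φ (x + d) - Φ x - d ∈ F (n + 1)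

namespace IsTangentToId

variable {K A : Type*} [Field K] [CharZero K] [Ring A] [Algebra K A] [UniformSpace A]
  {F : ℕ → Submodule K A} {Φ : A → A}

lemma injOn [T1Space A] (hF : IsCompleteFiltration K F) (hΦ : IsTangentToId F Φ) :
    Set.InjOn Φ (F 1 : Set A) := by
  intro x hx y hy hxy
  refine hF.eq_of_forall_sub_mem fun n => ?_
  induction n with
  | zero => exact sub_mem hx hy
  | succ n ih =>
    have h := hΦ y hy (n + 1) (by omega) (x - y) ih
    rwa [add_sub_cancel, hxy, sub_self, zero_sub, neg_mem_iff] at h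

lemma exists_eq [IsUniformAddGroup A] [CompleteSpace A] [T2Space A]
    (hF : IsCompleteFiltration K F) (hΦ : IsTangentToId F Φ)
    {η : A} (hη : η - Φ 0 ∈ F 1) : ∃ x ∈ F 1, Φ x = η := by
  set w : ℕ → A := fun m => (fun x => x + (η - Φ x))^[m] 0
  have hw_succ : ∀ m, w (m + 1) = w m + (η - Φ (w m)) := fun m =>
    Function.iterate_succ_apply' _ m 0
  have hinv : ∀ m, w m ∈ F 1 ∧ η - Φ (w m) ∈ F (m + 1) := by
    intro m
    induction m with
    | zero => exact ⟨zero_mem _, hη⟩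
    | succ m ih =>
      obtain ⟨hw1, hδ⟩ := ih
      have h := hΦ (w m) hw1 (m + 1) (by omega) _ hδ
      refine ⟨hw_succ m ▸ add_mem hw1 (hF.antitone (by omega) hδ), ?_⟩
      rw [hw_succ, show η - Φ (w m + (η - Φ (w m)))
        = -(Φ (w m + (η - Φ (w m))) - Φ (w m) - (η - Φ (w m))) by abel]
      exact neg_mem h
  obtain ⟨z, hz⟩ := hF.exists_forall_sub_mem (w := w) fun m => by
    rw [hw_succ, add_sub_cancel_left]
    exact (hinv m).2
  have hz1 : z ∈ F 1 := by simpa [w] using hz 0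
  refine ⟨z, hz1, (hF.eq_of_forall_sub_mem fun m => ?_).symm⟩
  have h := hΦ (w m) (hinv m).1 (m + 1) (by omega) _ (hz m)
  rw [add_sub_cancel] at h
  rw [show η - Φ z = (η - Φ (w m)) - (Φ z - Φ (w m) - (z - w m)) - (z - w m) by abel]
  exact sub_mem (sub_mem (hinv m).2 (hF.antitone (by omega) h)) (hz m)

end IsTangentToId

noncomputable def expSplit {K A : Type*} [Field K] [CharZero K] [Ring A] [Algebra K A]
    [UniformSpace A] (P : A →ₗ[K] A) (x : A) : A :=
  expS K (P x) * expS K (x - P x)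

section expSplit

variable {K A : Type*} [Field K] [CharZero K] [Ring A] [Algebra K A] [UniformSpace A]
  {F : ℕ → Submodule K A} {P : A →ₗ[K] A}

lemma expSplit_zero : expSplit P (0 : A) = 1 := by
  simp [expSplit, expS_zero]

lemma expSplit_add_sub (hPP : ∀ x : A, P (P x) = P x) (x y : A) :
    expSplit P (P x + (y - P y)) = expS K (P x) * expS K (y - P y) := by
  simp [expSplit, hPP]

lemma isTangentToId_expSplit [IsTopologicalRing A] [IsUniformAddGroup A] [CompleteSpace A]
    [T2Space A] (hF : IsCompleteFiltration K F) (hP : ∀ n, ∀ x ∈ F n, P x ∈ F n) :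
    IsTangentToId F (expSplit P) := by
  intro x hx n hn d hd
  have h := hF.expS_add_mul_expS_add_sub_mem (hP 1 x hx) (sub_mem hx (hP 1 x hx)) hn
    (hP n d hd) (sub_mem hd (hP n d hd))
  rwa [← map_add, add_sub_cancel, show x - P x + (d - P d) = x + d - P (x + d) by
    rw [map_add]; abel] at h

end expSplit

theorem stmt8 (F : ℕ → Submodule K A) (hF : IsCompleteFiltration K F)
    (P : A →ₗ[K] A) (hP : ∀ n, ∀ x ∈ F n, P x ∈ F n)
    (hPP : ∀ x : A, P (P x) = P x) :
    ∀ η : A, η - 1 ∈ F 1 →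
      ∃! p : A × A,
        p.1 ∈ expS K '' (⇑P '' (F 1 : Set A)) ∧
        p.2 ∈ expS K '' ((fun x => x - P x) '' (F 1 : Set A)) ∧
        η = p.1 * p.2 := by
  intro η hη
  have hΦ := isTangentToId_expSplit hF hP
  obtain ⟨x, hx, rfl⟩ := hΦ.exists_eq hF (by rwa [expSplit_zero])
  refine ⟨(expS K (P x), expS K (x - P x)),
    ⟨⟨P x, ⟨x, hx, rfl⟩, rfl⟩, ⟨x - P x, ⟨x, hx, rfl⟩, rfl⟩, rfl⟩, ?_⟩
  rintro ⟨_, _⟩ ⟨⟨_, ⟨y, hy, rfl⟩, rfl⟩, ⟨_, ⟨z, hz, rfl⟩, rfl⟩, h⟩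
  have hyz : P y + (z - P z) ∈ F 1 := add_mem (hP 1 y hy) (sub_mem hz (hP 1 z hz))
  have hx_eq : x = P y + (z - P z) :=
    hΦ.injOn hF hx hyz (h.trans (expSplit_add_sub hPP y z).symm)
  subst hx_eq
  simp [hPP]
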